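/- arXiv:1809.08979 — 3 statements merged into one kernel-verified Lean document; each statement's English description precedes it below -/
import Mathlib

section
/- Let V ∈ ℝ^{N×n} have orthonormal columns (VᵀV = I_n). Let b ∈ ℝ^{N×p}, let A ∈ ℝ^{N×N} and A_r := Vᵀ A V ∈ ℝ^{n×n} both be invertible, and set X := A⁻¹ b, X_r := A_r⁻¹ Vᵀ b. Then X − V X_r = (I − V A_r⁻¹ Vᵀ A)(I − V Vᵀ) X. -/
open Matrix

/-- Error of the Galerkin-projected solution:
`X − V X_r = (I − V A_r⁻¹ Vᵀ A)(I − V Vᵀ) X`. -/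
theorem galerkin_projection_error {N n p : ℕ}
    (V : Matrix (Fin N) (Fin n) ℝ) (b : Matrix (Fin N) (Fin p) ℝ)
    (A : Matrix (Fin N) (Fin N) ℝ)
    (hV : Vᵀ * V = 1) (hA : IsUnit A.det) (hAr : IsUnit (Vᵀ * A * V).det) :
    A⁻¹ * b - V * ((Vᵀ * A * V)⁻¹ * (Vᵀ * b))
      = (1 - V * (Vᵀ * A * V)⁻¹ * Vᵀ * A) * ((1 - V * Vᵀ) * (A⁻¹ * b)) := by
  have h1 : A * (A⁻¹ * b) = b := by
    rw [← Matrix.mul_assoc, Matrix.mul_nonsing_inv A hA, Matrix.one_mul]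
  have h2 : (Vᵀ * A * V)⁻¹ * (Vᵀ * A * V) = 1 := Matrix.nonsing_inv_mul _ hAr
  have key : V * ((Vᵀ * A * V)⁻¹ * (Vᵀ * (A * (V * (Vᵀ * (A⁻¹ * b)))))) =
      V * (Vᵀ * (A⁻¹ * b)) := by
    have : (Vᵀ * A * V)⁻¹ * (Vᵀ * (A * (V * (Vᵀ * (A⁻¹ * b))))) =
        ((Vᵀ * A * V)⁻¹ * (Vᵀ * A * V)) * (Vᵀ * (A⁻¹ * b)) := by
      simp only [Matrix.mul_assoc]
    rw [this, h2, Matrix.one_mul]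
  simp only [Matrix.sub_mul, Matrix.mul_sub, Matrix.one_mul, Matrix.mul_one,
    Matrix.mul_assoc] at *
  rw [h1, key]
  abel
end

section
/- Exact moment matching for linear systems: let H(s) = C(sE − A)⁻¹B, let V ∈ ℝ^{N×n} with VᵀV = I, and define the Galerkin-reduced transfer function H_r(s) = CV (s VᵀEV − VᵀAV)⁻¹ VᵀB. If span{k₀, …, k_k} ⊆ image(V), where k_i are the moment vectors of (sE − A)⁻¹B at s₀ (defined by A_{s₀}k₀ = −B, A_{s₀}k_i = E k_{i−1}), and if A_{s₀} and Vᵀ A_{s₀} V are invertible, then (dⁱ/dsⁱ)H(s)|_{s=s₀} = (dⁱ/dsⁱ)H_r(s)|_{s=s₀} for all i ≤ k, and moreover k_i = V k_{r,i} where the k_{r,i} satisfy the analogous reduced recursion with A_{r,s₀} = −s₀VᵀEV + VᵀAV. -/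
/-!
Write `A_s = -sE + A`, so that `(sE - A)⁻¹ = -A_s⁻¹` and `d/ds A_s⁻¹ = A_s⁻¹ E A_s⁻¹`; repeated
differentiation gives `dⁱ/dsⁱ A_s⁻¹ = i! (A_s⁻¹ E)ⁱ A_s⁻¹`. The moment recursion unwinds to
`kᵢ = -(A_{s₀}⁻¹ E)ⁱ A_{s₀}⁻¹ B`, hence `H⁽ⁱ⁾(s₀) = i! C kᵢ`, and likewise
`H_r⁽ⁱ⁾(s₀) = i! CV k_{r,i}` for the reduced pencil. Finally, if `kᵢ = V y` then
`Vᵀ A_{s₀} V y = Vᵀ A_{s₀} kᵢ` is `-VᵀB`, resp. `Vᵀ E k_{i-1} = Vᵀ E V k_{r,i-1}` by induction,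
which is the equation defining `k_{r,i}`; invertibility of `A_{r,s₀}` gives `y = k_{r,i}`.
-/

open Matrix
open scoped Nat

theorem Matrix.inv_neg {m α : Type*} [Fintype m] [DecidableEq m] [CommRing α]
    (M : Matrix m m α) : (-M)⁻¹ = -M⁻¹ := by
  by_cases hM : IsUnit M.det
  · exact inv_eq_left_inv (by rw [neg_mul_neg, nonsing_inv_mul _ hM])
  · have hM' : ¬IsUnit (-M).det := by
      rwa [det_neg, IsUnit.mul_iff, and_iff_right ((isUnit_neg_one).pow _)]
    rw [nonsing_inv_apply_not_isUnit _ hM, nonsing_inv_apply_not_isUnit _ hM', neg_zero]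

section Moments

variable {m l R : Type*} [Fintype m] [CommRing R]

/-- With `M = A_{s₀} = -s₀E + A`, these are the moment vectors `kᵢ` of `(sE - A)⁻¹B` at `s₀`. -/
def IsMomentSequence (M E : Matrix m m R) (B : Matrix m l R) (kv : ℕ → Matrix m l R) : Prop :=
  M * kv 0 = -B ∧ ∀ i, M * kv (i + 1) = E * kv i

theorem IsMomentSequence.eq_neg_inv_mul_pow [DecidableEq m] {M E : Matrix m m R}
    {B : Matrix m l R} {kv : ℕ → Matrix m l R} (hkv : IsMomentSequence M E B kv)
    (hM : IsUnit M.det) (j : ℕ) :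
    kv j = -((M⁻¹ * E) ^ j * M⁻¹ * B) := by
  induction j with
  | zero =>
    rw [pow_zero, Matrix.one_mul, ← neg_neg B, ← hkv.1, Matrix.mul_neg, neg_neg,
      nonsing_inv_mul_cancel_left _ _ hM]
  | succ j ih =>
    calc kv (j + 1) = M⁻¹ * (E * kv j) := by rw [← hkv.2, nonsing_inv_mul_cancel_left _ _ hM]
      _ = -((M⁻¹ * E) ^ (j + 1) * M⁻¹ * B) := by
        rw [ih, pow_succ', Matrix.mul_neg, Matrix.mul_neg, neg_inj]
        simp only [Matrix.mul_assoc]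

theorem IsMomentSequence.eq_mul_of_exists_mul_eq {n : Type*} [Fintype n] [DecidableEq n]
    {M E : Matrix m m R} {B : Matrix m l R} {kv : ℕ → Matrix m l R}
    {W : Matrix n m R} {V : Matrix m n R} {kr : ℕ → Matrix n l R}
    (hkv : IsMomentSequence M E B kv)
    (hkr : IsMomentSequence (W * M * V) (W * E * V) (W * B) kr) (hMr : IsUnit (W * M * V).det)
    {k : ℕ} (hspan : ∀ i ≤ k, ∃ Y : Matrix n l R, V * Y = kv i) :
    ∀ i ≤ k, kv i = V * kr i := by
  have of_reduced : ∀ i ≤ k, W * (M * kv i) = W * M * V * kr i → kv i = V * kr i := by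
    intro i hi h
    obtain ⟨Y, hY⟩ := hspan i hi
    have hY' : W * M * V * Y = W * M * V * kr i := by
      rw [← h, ← hY, Matrix.mul_assoc, Matrix.mul_assoc]
    rw [← hY, ← nonsing_inv_mul_cancel_left _ Y hMr, hY', nonsing_inv_mul_cancel_left _ _ hMr]
  intro i hi
  induction i with
  | zero => exact of_reduced 0 hi (by rw [hkv.1, hkr.1, Matrix.mul_neg])
  | succ j ih =>
    refine of_reduced (j + 1) hi ?_
    rw [hkv.2, hkr.2, ih (by omega), ← Matrix.mul_assoc, ← Matrix.mul_assoc]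

end Moments

section Resolvent

variable {𝕜 : Type*} [RCLike 𝕜]
  {m : Type*} [Fintype m] [DecidableEq m] (E A : Matrix m m 𝕜)

theorem isOpen_setOf_isUnit_det_neg_smul_add :
    IsOpen {s : 𝕜 | IsUnit ((-s) • E + A).det} := by
  simp only [isUnit_iff_ne_zero]
  exact isOpen_ne_fun
    (((continuous_neg.smul continuous_const).add continuous_const).matrix_det) continuous_const

attribute [local instance] Matrix.linftyOpNormedRing Matrix.linftyOpNormedAlgebra

theorem hasDerivAt_inv_neg_smul_add {s : 𝕜} (hs : IsUnit ((-s) • E + A).det) :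
    HasDerivAt (fun t : 𝕜 => ((-t) • E + A)⁻¹)
      (((-s) • E + A)⁻¹ * E * ((-s) • E + A)⁻¹) s := by
  obtain ⟨u, hu⟩ := (isUnit_iff_isUnit_det _).mpr hs
  have hpencil : HasDerivAt (fun t : 𝕜 => (-t) • E + A) (-E) s :=
    (((hasDerivAt_neg s).smul_const E).add_const A).congr_deriv (neg_one_smul 𝕜 E)
  have hinv : HasFDerivAt Ring.inverse
      (-ContinuousLinearMap.mulLeftRight 𝕜 _ ((-s) • E + A)⁻¹ ((-s) • E + A)⁻¹)
      ((-s) • E + A) := by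
    simpa only [← Ring.inverse_unit, hu, ← nonsing_inv_eq_ringInverse]
      using hasFDerivAt_ringInverse (𝕜 := 𝕜) u
  have := hinv.comp_hasDerivAt s hpencil
  simp only [Function.comp_def, ← nonsing_inv_eq_ringInverse, _root_.neg_apply,
    ContinuousLinearMap.mulLeftRight_apply, Matrix.mul_neg, Matrix.neg_mul, neg_neg] at this
  exact this

theorem hasDerivAt_inv_neg_smul_add_mul_pow {s : 𝕜} (hs : IsUnit ((-s) • E + A).det) (j : ℕ) :
    HasDerivAt (fun t : 𝕜 => (((-t) • E + A)⁻¹ * E) ^ j * ((-t) • E + A)⁻¹)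
      (((j : 𝕜) + 1) • ((((-s) • E + A)⁻¹ * E) ^ (j + 1) * ((-s) • E + A)⁻¹)) s := by
  induction j with
  | zero => simpa [Matrix.mul_assoc] using hasDerivAt_inv_neg_smul_add E A hs
  | succ j ih =>
    have hfun : (fun t : 𝕜 => (((-t) • E + A)⁻¹ * E) ^ (j + 1) * ((-t) • E + A)⁻¹)
        = fun t =>
          ((-t) • E + A)⁻¹ * E * ((((-t) • E + A)⁻¹ * E) ^ j * ((-t) • E + A)⁻¹) := by
      funext t; rw [pow_succ', Matrix.mul_assoc]
    rw [hfun]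
    refine (((hasDerivAt_inv_neg_smul_add E A hs).mul_const E).mul ih).congr_deriv ?_
    simp only [pow_succ', Matrix.mul_assoc, mul_smul_comm, Nat.cast_succ]
    module

theorem iteratedDeriv_clm_inv_neg_smul_add {F : Type*} [NormedAddCommGroup F]
    [NormedSpace 𝕜 F] (L : Matrix m m 𝕜 →L[𝕜] F) (j : ℕ) {s : 𝕜} (hs : IsUnit ((-s) • E + A).det) :
    iteratedDeriv j (fun t : 𝕜 => L ((-t) • E + A)⁻¹) s
      = (j ! : 𝕜) • L ((((-s) • E + A)⁻¹ * E) ^ j * ((-s) • E + A)⁻¹) := by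
  induction j generalizing s with
  | zero => simp
  | succ j ih =>
    have hev : iteratedDeriv j (fun t : 𝕜 => L ((-t) • E + A)⁻¹) =ᶠ[nhds s]
        fun t => (j ! : 𝕜) • L ((((-t) • E + A)⁻¹ * E) ^ j * ((-t) • E + A)⁻¹) :=
      Filter.eventually_of_mem ((isOpen_setOf_isUnit_det_neg_smul_add E A).mem_nhds hs)
        fun t ht => ih ht
    have hderiv : HasDerivAt
        (fun t : 𝕜 => (j ! : 𝕜) • L ((((-t) • E + A)⁻¹ * E) ^ j * ((-t) • E + A)⁻¹))
        ((j ! : 𝕜) •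
          L (((j : 𝕜) + 1) • ((((-s) • E + A)⁻¹ * E) ^ (j + 1) * ((-s) • E + A)⁻¹))) s :=
      (L.hasFDerivAt.comp_hasDerivAt s
        (hasDerivAt_inv_neg_smul_add_mul_pow E A hs j)).const_smul _
    rw [iteratedDeriv_succ, hev.deriv_eq, hderiv.deriv, map_smul, smul_smul, Nat.factorial_succ]
    push_cast [mul_comm]
    rfl

theorem IsMomentSequence.iteratedDeriv_transfer_apply {l o : Type*} {B : Matrix m l 𝕜}
    (C : Matrix o m 𝕜) {s₀ : 𝕜} {kv : ℕ → Matrix m l 𝕜}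
    (hkv : IsMomentSequence ((-s₀) • E + A) E B kv) (hA : IsUnit ((-s₀) • E + A).det)
    (i : ℕ) (r : o) (c : l) :
    iteratedDeriv i (fun s : 𝕜 => (C * (s • E - A)⁻¹ * B) r c) s₀ = i ! * (C * kv i) r c := by
  let L : Matrix m m 𝕜 →L[𝕜] 𝕜 := LinearMap.toContinuousLinearMap
    (entryLinearMap 𝕜 𝕜 r c ∘ₗ mulRightLinearMap o 𝕜 B ∘ₗ mulLeftLinearMap m 𝕜 C)
  have hL (X : Matrix m m 𝕜) : L X = (C * X * B) r c := rfl
  have hfun :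
      (fun s : 𝕜 => (C * (s • E - A)⁻¹ * B) r c) = fun s => -L ((-s) • E + A)⁻¹ := by
    funext s
    rw [hL, ← neg_neg (s • E - A), neg_sub, sub_eq_neg_add, ← neg_smul, Matrix.inv_neg,
      Matrix.mul_neg, Matrix.neg_mul, neg_apply]
  rw [hfun, iteratedDeriv_fun_neg, iteratedDeriv_clm_inv_neg_smul_add E A L i hA, hL,
    hkv.eq_neg_inv_mul_pow hA i]
  simp [Matrix.mul_assoc]

end Resolvent

theorem linear_moment_matching_general {N n p q : ℕ}
    (E A : Matrix (Fin N) (Fin N) ℝ)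
    (B : Matrix (Fin N) (Fin p) ℝ) (C : Matrix (Fin q) (Fin N) ℝ)
    (V : Matrix (Fin N) (Fin n) ℝ)
    (s₀ : ℝ)
    (hA : IsUnit ((-s₀) • E + A).det)
    (hAr : IsUnit ((-s₀) • (Vᵀ * E * V) + Vᵀ * A * V).det)
    (kvec : ℕ → Matrix (Fin N) (Fin p) ℝ)
    (hk0 : ((-s₀) • E + A) * kvec 0 = -B)
    (hk : ∀ i : ℕ, ((-s₀) • E + A) * kvec (i + 1) = E * kvec i)
    (kr : ℕ → Matrix (Fin n) (Fin p) ℝ)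
    (hkr0 : ((-s₀) • (Vᵀ * E * V) + Vᵀ * A * V) * kr 0 = -(Vᵀ * B))
    (hkr : ∀ i : ℕ, ((-s₀) • (Vᵀ * E * V) + Vᵀ * A * V) * kr (i + 1)
        = (Vᵀ * E * V) * kr i)
    (k : ℕ)
    (hspan : ∀ i ≤ k, ∃ Y : Matrix (Fin n) (Fin p) ℝ, V * Y = kvec i) :
    (∀ i ≤ k, ∀ r c,
        iteratedDeriv i (fun s : ℝ => (C * (s • E - A)⁻¹ * B) r c) s₀
          = iteratedDeriv i
              (fun s : ℝ =>
                (C * V * (s • (Vᵀ * E * V) - Vᵀ * A * V)⁻¹ * (Vᵀ * B)) r c) s₀)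
    ∧ ∀ i ≤ k, kvec i = V * kr i := by
  have hfull : IsMomentSequence ((-s₀) • E + A) E B kvec := ⟨hk0, hk⟩
  have hred : IsMomentSequence ((-s₀) • (Vᵀ * E * V) + Vᵀ * A * V) (Vᵀ * E * V) (Vᵀ * B) kr :=
    ⟨hkr0, hkr⟩
  have hAr_eq : (-s₀) • (Vᵀ * E * V) + Vᵀ * A * V = Vᵀ * ((-s₀) • E + A) * V := by
    rw [Matrix.mul_add, Matrix.add_mul, Matrix.mul_smul, Matrix.smul_mul]
  have hproj : ∀ i ≤ k, kvec i = V * kr i := by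
    rw [hAr_eq] at hAr hred
    exact hfull.eq_mul_of_exists_mul_eq hred hAr hspan
  refine ⟨fun i hi r c => ?_, hproj⟩
  rw [hfull.iteratedDeriv_transfer_apply E A C hA,
    hred.iteratedDeriv_transfer_apply _ _ (C * V) hAr, hproj i hi, Matrix.mul_assoc]

/-- Exact moment matching for linear systems via Galerkin projection: if the moment
vectors `k₀, …, k_k` of `(sE − A)⁻¹B` at `s₀` all lie in the image of the orthonormal
basis `V`, then the first `k` derivatives of `H(s) = C(sE − A)⁻¹B` and of the reduced
transfer function `H_r(s) = CV (sVᵀEV − VᵀAV)⁻¹ VᵀB` coincide at `s₀`, and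
`k_i = V k_{r,i}` for the reduced moment vectors `k_{r,i}`. -/
theorem linear_moment_matching {N n p q : ℕ}
    (E A : Matrix (Fin N) (Fin N) ℝ)
    (B : Matrix (Fin N) (Fin p) ℝ) (C : Matrix (Fin q) (Fin N) ℝ)
    (V : Matrix (Fin N) (Fin n) ℝ) (hV : Vᵀ * V = 1)
    (s₀ : ℝ)
    (hA : IsUnit ((-s₀) • E + A).det)
    (hAr : IsUnit ((-s₀) • (Vᵀ * E * V) + Vᵀ * A * V).det)
    (kvec : ℕ → Matrix (Fin N) (Fin p) ℝ)
    (hk0 : ((-s₀) • E + A) * kvec 0 = -B)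
    (hk : ∀ i : ℕ, ((-s₀) • E + A) * kvec (i + 1) = E * kvec i)
    (kr : ℕ → Matrix (Fin n) (Fin p) ℝ)
    (hkr0 : ((-s₀) • (Vᵀ * E * V) + Vᵀ * A * V) * kr 0 = -(Vᵀ * B))
    (hkr : ∀ i : ℕ, ((-s₀) • (Vᵀ * E * V) + Vᵀ * A * V) * kr (i + 1)
        = (Vᵀ * E * V) * kr i)
    (k : ℕ)
    (hspan : ∀ i ≤ k, ∃ Y : Matrix (Fin n) (Fin p) ℝ, V * Y = kvec i) :
    (∀ i ≤ k, ∀ r c,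
        iteratedDeriv i (fun s : ℝ => (C * (s • E - A)⁻¹ * B) r c) s₀
          = iteratedDeriv i
              (fun s : ℝ =>
                (C * V * (s • (Vᵀ * E * V) - Vᵀ * A * V)⁻¹ * (Vᵀ * B)) r c) s₀)
    ∧ ∀ i ≤ k, kvec i = V * kr i :=
  linear_moment_matching_general E A B C V s₀ hA hAr kvec hk0 hk kr hkr0 hkr k hspan
end

section
/- Moment recursion for the cascaded second-order representation: with Ĕ₂, Ă₂, b̆₂ as in the linear realization of W₂, and s₀ such that A_{s₀} = −s₀E + A and ⊛²_E(A_{s₀/2}) = −s₀E⊗E + A⊗E + E⊗A are invertible, the moments k_i = [m_i; h_i] of s ↦ (sĔ₂ − Ă₂)⁻¹ b̆₂ at s₀ (defined recursively by (−s₀Ĕ₂ + Ă₂) k₀ = −b̆₂ and (−s₀Ĕ₂ + Ă₂) k_i = Ĕ₂ k_{i−1}) satisfy: ⊛²_E(A_{s₀/2}) h₀ = −b^{⊗2}, A_{s₀} m₀ = −G h₀; and for i > 0, ⊛²_E(A_{s₀/2}) h_i = (E⊗E) h_{i−1}, A_{s₀} m_i = E m_{i−1} − G h_i. -/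
open Matrix
open scoped Kronecker

lemma kron_split {m : ℕ} (E A : Matrix (Fin m) (Fin m) ℝ) (s₀ : ℝ) :
    (((-(s₀ / 2)) • E + A) ⊗ₖ E + E ⊗ₖ ((-(s₀ / 2)) • E + A))
      = (-s₀) • (E ⊗ₖ E) + (A ⊗ₖ E + E ⊗ₖ A) := by
  rw [Matrix.add_kronecker, Matrix.kronecker_add, Matrix.smul_kronecker,
    Matrix.kronecker_smul]
  module

/-- Moment recursion for the cascaded second-order representation: if
`k_i = [m_i; h_i]` satisfy the moment recursion for the pencil `(Ĕ₂, Ă₂)` with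
right-hand side `b̆₂ = [0; b⊗b]`, then the blocks satisfy
`⊛²_E(A_{s₀/2}) h₀ = −b⊗b`, `A_{s₀} m₀ = −G h₀`, and for `i > 0`
`⊛²_E(A_{s₀/2}) h_i = (E⊗E) h_{i−1}`, `A_{s₀} m_i = E m_{i−1} − G h_i`. -/
theorem W2_moment_recursion {m : ℕ} (E A : Matrix (Fin m) (Fin m) ℝ)
    (G : Matrix (Fin m) (Fin m × Fin m) ℝ) (b : Matrix (Fin m) (Fin 1) ℝ) (s₀ : ℝ)
    (h1 : IsUnit ((-s₀) • E + A).det)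
    (h2 : IsUnit ((-s₀) • (E ⊗ₖ E) + (A ⊗ₖ E + E ⊗ₖ A)).det)
    (mm : ℕ → Matrix (Fin m) (Fin 1 × Fin 1) ℝ)
    (hh : ℕ → Matrix (Fin m × Fin m) (Fin 1 × Fin 1) ℝ)
    (hk0 : ((-s₀) • fromBlocks E 0 0 (E ⊗ₖ E)
          + fromBlocks A G 0 (A ⊗ₖ E + E ⊗ₖ A)) * fromRows (mm 0) (hh 0)
        = -(fromRows (0 : Matrix (Fin m) (Fin 1 × Fin 1) ℝ) (b ⊗ₖ b)))
    (hki : ∀ i : ℕ, ((-s₀) • fromBlocks E 0 0 (E ⊗ₖ E)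
          + fromBlocks A G 0 (A ⊗ₖ E + E ⊗ₖ A)) * fromRows (mm (i + 1)) (hh (i + 1))
        = fromBlocks E 0 0 (E ⊗ₖ E) * fromRows (mm i) (hh i)) :
    ((((-(s₀ / 2)) • E + A) ⊗ₖ E + E ⊗ₖ ((-(s₀ / 2)) • E + A)) * hh 0 = -(b ⊗ₖ b)
      ∧ ((-s₀) • E + A) * mm 0 = -(G * hh 0))
    ∧ ∀ i : ℕ,
        (((-(s₀ / 2)) • E + A) ⊗ₖ E + E ⊗ₖ ((-(s₀ / 2)) • E + A)) * hh (i + 1)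
            = (E ⊗ₖ E) * hh i
        ∧ ((-s₀) • E + A) * mm (i + 1) = E * mm i - G * hh (i + 1) := by
  rw [Matrix.fromBlocks_smul] at hk0 hki
  rw [Matrix.fromBlocks_add] at hk0 hki
  rw [Matrix.fromBlocks_mul_fromRows, Matrix.fromRows_neg] at hk0
  simp only [Matrix.fromBlocks_mul_fromRows] at hki
  have e01 := congrArg Matrix.toRows₁ hk0
  have e02 := congrArg Matrix.toRows₂ hk0
  simp only [Matrix.toRows₁_fromRows, Matrix.toRows₂_fromRows, smul_zero, zero_add, neg_zero,
    add_zero, Matrix.zero_mul, neg_zero] at e01 e02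
  refine ⟨⟨?_, ?_⟩, fun i => ?_⟩
  · rw [kron_split]; exact e02
  · exact eq_neg_of_add_eq_zero_left e01
  · have e1 := congrArg Matrix.toRows₁ (hki i)
    have e2 := congrArg Matrix.toRows₂ (hki i)
    simp only [Matrix.toRows₁_fromRows, Matrix.toRows₂_fromRows, smul_zero, zero_add, neg_zero,
      add_zero, Matrix.zero_mul] at e1 e2
    constructor
    · rw [kron_split]; exact e2
    · rw [eq_sub_iff_add_eq]
      exact e1
end
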